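/- arXiv:1805.06568 — 4 statements merged into one kernel-verified Lean document; each statement's English description precedes it below -/
import Mathlib

section
/- 4/π = ∑_{n=0}^∞ ((1/2)_n)^2/((n+1)(n!)^2). -/
open Real

noncomputable def rising (x : ℝ) (n : ℕ) : ℝ := ∏ i ∈ Finset.range n, (x + i)

noncomputable def gw (n : ℕ) : ℝ := ∏ i ∈ Finset.range n, ((2 * i + 1) / (2 * i + 2))

lemma gw_succ (n : ℕ) : gw (n + 1) = gw n * ((2 * n + 1) / (2 * n + 2)) :=
  Finset.prod_range_succ _ _

lemma gw_pos (n : ℕ) : 0 < gw n := by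
  apply Finset.prod_pos
  intro i _
  positivity

lemma rising_eq (n : ℕ) : rising (1/2) n = gw n * (n.factorial : ℝ) := by
  induction n with
  | zero => simp [rising, gw]
  | succ n ih =>
    rw [rising, Finset.prod_range_succ, ← rising, ih, gw_succ, Nat.factorial_succ]
    push_cast
    have h : (2 * (n : ℝ) + 2) ≠ 0 := by positivity
    field_simp
    ring

lemma partial_sum (N : ℕ) :
    ∑ n ∈ Finset.range (N + 1), gw n ^ 2 / (n + 1) = (2 * N + 1) ^ 2 * gw N ^ 2 / (N + 1) := by
  induction N with
  | zero => simp [gw]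
  | succ N ih =>
    rw [Finset.sum_range_succ, ih, gw_succ]
    have h1 : ((N : ℝ) + 1) ≠ 0 := by positivity
    have h2 : (2 * (N : ℝ) + 2) ≠ 0 := by positivity
    have h3 : ((N : ℝ) + 1 + 1) ≠ 0 := by positivity
    push_cast
    field_simp
    ring

lemma wallis_gw (N : ℕ) : Real.Wallis.W N * ((2 * N + 1) * gw N ^ 2) = 1 := by
  induction N with
  | zero => simp [Real.Wallis.W, gw]
  | succ N ih =>
    rw [Real.Wallis.W_succ, gw_succ]
    have h1 : (2 * (N : ℝ) + 1) ≠ 0 := by positivity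
    have h2 : (2 * (N : ℝ) + 2) ≠ 0 := by positivity
    have h3 : (2 * (N : ℝ) + 3) ≠ 0 := by positivity
    push_cast
    field_simp
    field_simp at ih
    linear_combination (2*(N:ℝ)+3) * ih

theorem stmt3 :
    4 / π = ∑' n : ℕ, (rising (1/2) n) ^ 2 / ((n + 1) * (n.factorial : ℝ) ^ 2) := by
  have hterm : ∀ n : ℕ, (rising (1/2) n) ^ 2 / ((n + 1) * (n.factorial : ℝ) ^ 2)
      = gw n ^ 2 / (n + 1) := by
    intro n
    rw [rising_eq]
    have hf : ((n.factorial : ℝ)) ≠ 0 := Nat.cast_ne_zero.mpr n.factorial_ne_zero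
    have h1 : ((n : ℝ) + 1) ≠ 0 := by positivity
    field_simp
  have hsum : HasSum (fun n : ℕ => (rising (1/2) n) ^ 2 / ((n + 1) * (n.factorial : ℝ) ^ 2))
      (4 / π) := by
    rw [funext hterm]
    rw [hasSum_iff_tendsto_nat_of_nonneg (fun n => by positivity)]
    rw [← Filter.tendsto_add_atTop_iff_nat 1]
    have heq : (fun N : ℕ => ∑ n ∈ Finset.range (N + 1), gw n ^ 2 / (n + 1))
        = fun N : ℕ => ((2 * N + 1) / (N + 1)) * (Real.Wallis.W N)⁻¹ := by
      funext N
      rw [partial_sum]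
      have hW := wallis_gw N
      have hWpos := Real.Wallis.W_pos N
      have h1 : ((N : ℝ) + 1) ≠ 0 := by positivity
      have hinv : (Real.Wallis.W N)⁻¹ = (2 * N + 1) * gw N ^ 2 := by
        field_simp
        linarith [hW]
      rw [hinv]
      field_simp
    rw [heq]
    have h2 : Filter.Tendsto (fun N : ℕ => ((2 * (N : ℝ) + 1) / (N + 1))) Filter.atTop (nhds 2) := by
      have : (fun N : ℕ => ((2 * (N : ℝ) + 1) / (N + 1))) = fun N : ℕ => 2 - 1 / ((N : ℝ) + 1) := by
        funext N
        have h1 : ((N : ℝ) + 1) ≠ 0 := by positivity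
        field_simp
        ring
      rw [this]
      have := tendsto_one_div_add_atTop_nhds_zero_nat (𝕜 := ℝ)
      simpa using (tendsto_const_nhds (x := (2:ℝ))).sub this
    have h3 : Filter.Tendsto (fun N : ℕ => (Real.Wallis.W N)⁻¹) Filter.atTop (nhds (π/2)⁻¹) :=
      Real.Wallis.tendsto_W_nhds_pi_div_two.inv₀ (by positivity)
    have := h2.mul h3
    have hpi : (2 : ℝ) * (π / 2)⁻¹ = 4 / π := by
      rw [inv_div]
      ring
    rwa [hpi] at this
  exact hsum.tsum_eq.symm
end

section
/- 16/(9π) = ∑_{n=0}^∞ ((1/2)_n)^2/((n+1)(n+2)(n!)^2). -/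
/-!
With `a n = (1/2)_n / n!` one has `a (n + 1) = a n * (2n + 1) / (2n + 2)`, and the partial sums
telescope: `∑_{n < N} a n ^ 2 / ((n + 1) (n + 2)) = 4N (4N + 5) / (9 (N + 1)) * a N ^ 2`.
Since `(2N + 1) a N ^ 2` is the reciprocal of the `N`-th partial Wallis product, it tends to `2 / π`,
so the partial sums tend to `8/9 * 2/π = 16 / (9π)`.
-/

open Real

open Filter Finset Topology Nat

lemma rising_succ (x : ℝ) (n : ℕ) : rising x (n + 1) = rising x n * (x + n) :=
  prod_range_succ _ _

lemma rising_half_div_factorial_sq_mul_wallis (n : ℕ) :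
    (rising (1/2) n / n !) ^ 2 * (2 * n + 1) * Wallis.W n = 1 := by
  induction n with
  | zero => simp [rising, Wallis.W]
  | succ n ih =>
    rw [rising_succ, Wallis.W_succ, factorial_succ]
    field_simp at ih
    push_cast
    field_simp
    linear_combination (2 * (n : ℝ) + 1) * (2 * n + 3) * ih

lemma tendsto_rising_half_div_factorial_sq_mul :
    Tendsto (fun n : ℕ => (rising (1/2) n / n !) ^ 2 * (2 * n + 1)) atTop (𝓝 (2 / π)) := by
  have hW : ∀ n : ℕ, (Wallis.W n)⁻¹ = (rising (1/2) n / n !) ^ 2 * (2 * n + 1) := fun n =>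
    inv_eq_of_mul_eq_one_left (rising_half_div_factorial_sq_mul_wallis n)
  have h := Wallis.tendsto_W_nhds_pi_div_two.inv₀ (by positivity)
  rwa [inv_div, funext hW] at h

lemma sum_range_rising_half_sq (N : ℕ) :
    ∑ n ∈ range N, rising (1/2) n ^ 2 / ((n + 1) * (n + 2) * (n ! : ℝ) ^ 2) =
      4 * N * (4 * N + 5) / (9 * (N + 1)) * (rising (1/2) N / N !) ^ 2 := by
  induction N with
  | zero => simp
  | succ N ih =>
    rw [sum_range_succ, ih, rising_succ, factorial_succ]
    push_cast
    field_simp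
    ring

lemma tendsto_telescoping_factor :
    Tendsto (fun N : ℕ => 4 * N * (4 * N + 5) / (9 * (N + 1) * (2 * N + 1) : ℝ))
      atTop (𝓝 (8 / 9)) := by
  have hlin : Tendsto (fun N : ℕ => (2 * N + 1 : ℝ)) atTop atTop :=
    tendsto_atTop_add_const_right _ _
      (tendsto_natCast_atTop_atTop.const_mul_atTop (by norm_num))
  have h := ((tendsto_natCast_div_add_atTop (1 : ℝ)).const_mul (4 / 9)).mul
    (tendsto_const_nhds.add (tendsto_const_nhds.div_atTop hlin) : Tendsto
      (fun N : ℕ => 2 + 3 / (2 * N + 1 : ℝ)) atTop (𝓝 (2 + 0)))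
  convert h using 1
  · ext N
    field_simp
    ring
  · norm_num

theorem stmt4 :
    16 / (9 * π) =
    ∑' n : ℕ, (rising (1/2) n) ^ 2 / ((n + 1) * (n + 2) * (n.factorial : ℝ) ^ 2) := by
  refine (((hasSum_iff_tendsto_nat_of_nonneg (fun n => by positivity) _).mpr ?_).tsum_eq).symm
  have h := tendsto_telescoping_factor.mul tendsto_rising_half_div_factorial_sq_mul
  convert h using 1
  · ext N
    rw [sum_range_rising_half_sq]
    field_simp
  · field_simp
    norm_num
end

section
/- For every nonnegative integer k, 32(k+2)!(k+3)!/(π ((1/2)_{k+2})^2) = 32k^2 + 168k + 217 + 18(k+2)! · ∑_{n=1}^∞ ((1/2)_n)^2/((n+2)!(k+n+2)!). -/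
open Real

open Filter Topology

namespace Stmt8Aux


noncomputable def r (m : ℕ) : ℝ := rising (1/2) m

lemma r_succ (m : ℕ) : r (m+1) = r m * ((m : ℝ) + 1/2) := by
  unfold r rising
  rw [Finset.prod_range_succ]
  ring

lemma r_pos (m : ℕ) : 0 < r m := by
  unfold r rising
  apply Finset.prod_pos
  intro i _
  positivity

lemma r_le (m : ℕ) : r m ≤ (m.factorial : ℝ) := by
  induction m with
  | zero => simp [r, rising]
  | succ n ih =>
      rw [r_succ, Nat.factorial_succ]
      push_cast
      have h1 : (n : ℝ) + 1/2 ≤ (n : ℝ) + 1 := by linarith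
      calc r n * ((n:ℝ) + 1/2) ≤ (n.factorial : ℝ) * ((n:ℝ)+1) := by
            apply mul_le_mul ih h1 (by positivity) (by positivity)
        _ = ((n:ℝ)+1) * (n.factorial : ℝ) := by ring

lemma r_eq (m : ℕ) : r m = ((2*m).factorial : ℝ) / (4^m * m.factorial) := by
  induction m with
  | zero => simp [r, rising]
  | succ n ih =>
      rw [r_succ, ih]
      have h2 : 2 * (n+1) = (2*n) + 1 + 1 := by ring
      rw [h2, Nat.factorial_succ, Nat.factorial_succ, Nat.factorial_succ]
      have h4 : (0:ℝ) < 4 ^ n := by positivity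
      have hf : (0:ℝ) < (n.factorial : ℝ) := by exact_mod_cast n.factorial_pos
      field_simp
      push_cast
      ring

noncomputable def u (K n : ℕ) : ℝ := (r (n+1))^2 / ((n+3).factorial * (K+n+3).factorial)

lemma u_nonneg (K n : ℕ) : 0 ≤ u K n := by
  unfold u; positivity

lemma fact_key (K n : ℕ) : (K+3).factorial * (n+3).factorial ≤ 6 * (K+n+3).factorial := by
  induction n with
  | zero =>
      have h : (0+3).factorial = 6 := rfl
      rw [h, show K+0+3 = K+3 from rfl]; omega
  | succ m ih =>
      have h1 : K + (m+1) + 3 = (K + m + 3) + 1 := by omega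
      rw [h1, Nat.factorial_succ]
      have h2 : (m+1+3).factorial = (m+4) * (m+3).factorial := by
        rw [show m+1+3 = (m+3)+1 by omega, Nat.factorial_succ]
      rw [h2]
      calc (K+3).factorial * ((m+4) * (m+3).factorial)
          = (m+4) * ((K+3).factorial * (m+3).factorial) := by ring
        _ ≤ (m+4) * (6 * (K+m+3).factorial) := Nat.mul_le_mul_left _ ih
        _ ≤ (K+m+3+1) * (6 * (K+m+3).factorial) := by
            apply Nat.mul_le_mul_right; omega
        _ = 6 * ((K+m+3+1) * (K+m+3).factorial) := by ring

lemma u_le (K n : ℕ) : u K n ≤ 6 / (((K+3).factorial:ℝ) * ((n:ℝ)+1)^2) := by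
  have hf3 : (0:ℝ) < (((n+3).factorial:ℝ) * ((K+n+3).factorial:ℝ)) := by positivity
  have hden : (0:ℝ) < ((K+3).factorial:ℝ) * ((n:ℝ)+1)^2 := by positivity
  rw [u, div_le_div_iff₀ hf3 hden]
  have e1 : ((n:ℝ)+1) * ((n+1).factorial:ℝ) ≤ ((n+3).factorial:ℝ) := by
    have h : (n+3).factorial = (n+3)*((n+2)*(n+1).factorial) := by
      rw [show n+3 = (n+2)+1 by omega, Nat.factorial_succ,
        show n+2 = (n+1)+1 by omega, Nat.factorial_succ]
    rw [h]; push_cast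
    have hfp : (0:ℝ) < ((n+1).factorial:ℝ) := by exact_mod_cast (n+1).factorial_pos
    nlinarith [hfp]
  have e3 : ((K+3).factorial:ℝ) * ((n+3).factorial:ℝ) ≤ 6 * ((K+n+3).factorial:ℝ) := by
    exact_mod_cast fact_key K n
  calc r (n+1)^2 * (((K+3).factorial:ℝ) * ((n:ℝ)+1)^2)
      = ((((n:ℝ)+1)) * r (n+1))^2 * ((K+3).factorial:ℝ) := by ring
    _ ≤ (((n+3).factorial:ℝ))^2 * ((K+3).factorial:ℝ) := by
        apply mul_le_mul_of_nonneg_right _ (by positivity)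
        have hstep : ((n:ℝ)+1) * r (n+1) ≤ ((n+3).factorial:ℝ) := by
          calc ((n:ℝ)+1) * r (n+1) ≤ ((n:ℝ)+1) * ((n+1).factorial:ℝ) := by
                apply mul_le_mul_of_nonneg_left (r_le _) (by positivity)
            _ ≤ ((n+3).factorial:ℝ) := e1
        exact pow_le_pow_left₀ (mul_nonneg (by positivity) (r_pos (n+1)).le) hstep 2
    _ = ((n+3).factorial:ℝ) * (((K+3).factorial:ℝ) * ((n+3).factorial:ℝ)) := by ring
    _ ≤ ((n+3).factorial:ℝ) * (6*((K+n+3).factorial:ℝ)) :=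
        mul_le_mul_of_nonneg_left e3 (by positivity)
    _ = 6 * (((n+3).factorial:ℝ) * ((K+n+3).factorial:ℝ)) := by ring

lemma summable_base : Summable (fun n : ℕ => 1/((n:ℝ)+1)^2) := by
  have h : Summable (fun n : ℕ => 1/((n:ℝ))^2) := by
    rw [summable_one_div_nat_pow]; norm_num
  have := (summable_nat_add_iff 1).mpr h
  apply this.congr
  intro n; push_cast; ring

lemma summable_u (K : ℕ) : Summable (u K) := by
  apply Summable.of_nonneg_of_le (u_nonneg K) (u_le K)
  have := (summable_base.mul_left (6 / ((K+3).factorial:ℝ)))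
  apply this.congr
  intro n
  field_simp

lemma r_zero : r 0 = 1 := by simp [r, rising]
lemma r_one : r 1 = 1/2 := by rw [r_succ 0, r_zero]; norm_num

noncomputable def S (K : ℕ) : ℝ := ∑' n, u K n

noncomputable def w (K n : ℕ) : ℝ := ((n:ℝ)+3) * u K n

lemma w_tendsto (K : ℕ) : Tendsto (w K) atTop (𝓝 0) := by
  have hle : ∀ n, w K n ≤ 18/(((n:ℝ)+1)) := by
    intro n
    have h1 := u_le K n
    have h2 : ((n:ℝ)+3) ≤ 3*((n:ℝ)+1) := by push_cast; linarith
    have hfac : (1:ℝ) ≤ ((K+3).factorial:ℝ) := by exact_mod_cast (K+3).factorial_pos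
    calc w K n ≤ ((n:ℝ)+3) * (6 / (((K+3).factorial:ℝ) * ((n:ℝ)+1)^2)) := by
          exact mul_le_mul_of_nonneg_left h1 (by positivity)
      _ ≤ (3*((n:ℝ)+1)) * (6 / (1 * ((n:ℝ)+1)^2)) := by
          apply mul_le_mul h2 _ (by positivity) (by positivity)
          apply div_le_div_of_nonneg_left (by norm_num) (by positivity)
          apply mul_le_mul_of_nonneg_right hfac (by positivity)
      _ = 18/(((n:ℝ)+1)) := by field_simp; ring
  have hge : ∀ n, 0 ≤ w K n := fun n => mul_nonneg (by positivity) (u_nonneg K n)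
  have hb : Tendsto (fun n : ℕ => 18/(((n:ℝ)+1))) atTop (𝓝 0) := by
    apply Tendsto.div_atTop tendsto_const_nhds
    exact tendsto_atTop_add_const_right _ _ tendsto_natCast_atTop_atTop
  exact tendsto_of_tendsto_of_tendsto_of_le_of_le tendsto_const_nhds hb hge hle

lemma term_identity (K n : ℕ) :
    ((K:ℝ)+4) * u K n - ((K:ℝ)+5/2)^2 * u (K+1) n = w K n - w K (n+1) := by
  simp only [w, u]
  have e1 : (K+1)+n+3 = (K+n+3)+1 := by omega
  have e2 : K+(n+1)+3 = (K+n+3)+1 := by omega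
  have e3 : (n+1)+3 = (n+3)+1 := by omega
  rw [e1, e2, e3, r_succ (n+1)]
  have f1 : (((K+n+3)+1).factorial:ℝ) = ((K:ℝ)+(n:ℝ)+4) * ((K+n+3).factorial:ℝ) := by
    rw [Nat.factorial_succ]; push_cast; ring
  have f2 : (((n+3)+1).factorial:ℝ) = ((n:ℝ)+4) * ((n+3).factorial:ℝ) := by
    rw [Nat.factorial_succ]; push_cast; ring
  rw [f1, f2]
  have h1 : (0:ℝ) < ((n+3).factorial:ℝ) := by exact_mod_cast (n+3).factorial_pos
  have h2 : (0:ℝ) < ((K+n+3).factorial:ℝ) := by exact_mod_cast (K+n+3).factorial_pos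
  have h3 : ((n:ℝ)+4) ≠ 0 := by positivity
  have h4 : ((K:ℝ)+(n:ℝ)+4) ≠ 0 := by positivity
  field_simp
  push_cast
  ring

lemma hasSum_tel (K : ℕ) : HasSum (fun n => w K n - w K (n+1)) (w K 0) := by
  have hsummable : Summable (fun n => w K n - w K (n+1)) := by
    have : (fun n => w K n - w K (n+1)) =
        (fun n => ((K:ℝ)+4) * u K n - ((K:ℝ)+5/2)^2 * u (K+1) n) := by
      funext n; exact (term_identity K n).symm
    rw [this]
    exact (((summable_u K).mul_left _).sub (((summable_u (K+1))).mul_left _))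
  have h1 : Tendsto (fun N => ∑ i ∈ Finset.range N, (w K i - w K (i+1))) atTop
      (𝓝 (∑' n, (w K n - w K (n+1)))) := hsummable.hasSum.tendsto_sum_nat
  have h2 : Tendsto (fun N => ∑ i ∈ Finset.range N, (w K i - w K (i+1))) atTop
      (𝓝 (w K 0)) := by
    have : (fun N => ∑ i ∈ Finset.range N, (w K i - w K (i+1))) =
        (fun N => w K 0 - w K N) := by
      funext N; exact Finset.sum_range_sub' (w K) N
    rw [this]
    simpa using (tendsto_const_nhds.sub (w_tendsto K))
  have : (∑' n, (w K n - w K (n+1))) = w K 0 := tendsto_nhds_unique h1 h2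
  rw [← this]; exact hsummable.hasSum

lemma S_rec (K : ℕ) :
    ((K:ℝ)+4) * S K - ((K:ℝ)+5/2)^2 * S (K+1) = 1/(8*((K+3).factorial:ℝ)) := by
  have h1 : ((K:ℝ)+4) * S K - ((K:ℝ)+5/2)^2 * S (K+1) =
      ∑' n, (((K:ℝ)+4) * u K n - ((K:ℝ)+5/2)^2 * u (K+1) n) := by
    unfold S
    rw [Summable.tsum_sub (((summable_u K)).mul_left _) (((summable_u (K+1))).mul_left _),
      tsum_mul_left, tsum_mul_left]
  rw [h1]
  have h2 : ∑' n, (((K:ℝ)+4) * u K n - ((K:ℝ)+5/2)^2 * u (K+1) n) = w K 0 := by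
    have := (hasSum_tel K).tsum_eq
    rw [← this]
    congr 1; funext n; exact term_identity K n
  rw [h2]
  unfold w u
  rw [r_one]
  have : (0+3).factorial = 6 := rfl
  rw [this, show K+0+3 = K+3 from rfl]
  have h3 : (0:ℝ) < ((K+3).factorial:ℝ) := by exact_mod_cast (K+3).factorial_pos
  field_simp
  ring

noncomputable def P (K : ℕ) : ℝ := 32*(K:ℝ)^2 + 168*(K:ℝ) + 217
noncomputable def Phi (K : ℕ) : ℝ := 18 * ((K+2).factorial:ℝ) * S K
noncomputable def Psi (K : ℕ) : ℝ :=
  32 * ((K+2).factorial:ℝ) * ((K+3).factorial:ℝ) / (π * (r (K+2))^2) - P K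
noncomputable def D (K : ℕ) : ℝ := Psi K - Phi K

lemma fact_cast_succ (m : ℕ) : ((m+1).factorial:ℝ) = ((m:ℝ)+1) * (m.factorial:ℝ) := by
  rw [Nat.factorial_succ]; push_cast; ring

lemma Phi_rec (K : ℕ) :
    ((K:ℝ)+5/2)^2 * Phi (K+1) = ((K:ℝ)+3)*((K:ℝ)+4)*Phi K - 9/4 := by
  have hf : ((K+3).factorial:ℝ) ≠ 0 := by
    exact_mod_cast (K+3).factorial_pos.ne'
  have hs2 : (((K:ℝ)+4) * S K - ((K:ℝ)+5/2)^2 * S (K+1)) * (8*((K+3).factorial:ℝ)) = 1 := by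
    rw [S_rec K]; field_simp
  have f1 : (((K+1)+2).factorial:ℝ) = ((K:ℝ)+3) * ((K+2).factorial:ℝ) := by
    rw [show (K+1)+2 = (K+2)+1 by omega, fact_cast_succ]; push_cast; ring
  have f1' : ((K+3).factorial:ℝ) = ((K:ℝ)+3) * ((K+2).factorial:ℝ) := by
    rw [show K+3 = (K+2)+1 by omega, fact_cast_succ]; push_cast; ring
  unfold Phi
  rw [f1]
  linear_combination (-(9:ℝ)/4) * hs2 + 18*((K:ℝ)+4)*(S K) * f1' - 18*((K:ℝ)+5/2)^2*(S (K+1)) * f1'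

lemma Psi_rec (K : ℕ) :
    ((K:ℝ)+5/2)^2 * Psi (K+1) = ((K:ℝ)+3)*((K:ℝ)+4)*Psi K - 9/4 := by
  have hr : r (K+2) ≠ 0 := (r_pos _).ne'
  have hpi : (π:ℝ) ≠ 0 := Real.pi_ne_zero
  unfold Psi P
  rw [show (K+1)+2 = (K+2)+1 by omega, show (K+1)+3 = (K+3)+1 by omega,
    r_succ (K+2), fact_cast_succ (K+2), fact_cast_succ (K+3),
    show ((K+3).factorial:ℝ) = ((K:ℝ)+3) * ((K+2).factorial:ℝ) by
      rw [show K+3 = (K+2)+1 by omega, fact_cast_succ]; push_cast; ring]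
  push_cast
  field_simp
  ring

lemma D_rec (K : ℕ) :
    ((K:ℝ)+5/2)^2 * D (K+1) = ((K:ℝ)+3)*((K:ℝ)+4)*D K := by
  unfold D
  linear_combination Psi_rec K - Phi_rec K

noncomputable def q (K : ℕ) : ℝ :=
  D K * (64/3) * (r (K+2))^2 / (((K+2).factorial:ℝ) * ((K+3).factorial:ℝ))

lemma q_succ (K : ℕ) : q (K+1) = q K := by
  have hD := D_rec K
  have h52 : ((K:ℝ)+5/2)^2 ≠ 0 := by positivity
  have hDval : D (K+1) = ((K:ℝ)+3)*((K:ℝ)+4)*D K / ((K:ℝ)+5/2)^2 := by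
    field_simp
    linarith [hD]
  unfold q
  rw [hDval, show (K+1)+2 = (K+2)+1 by omega, show (K+1)+3 = (K+3)+1 by omega,
    r_succ (K+2), fact_cast_succ (K+2), fact_cast_succ (K+3),
    show ((K+3).factorial:ℝ) = ((K:ℝ)+3) * ((K+2).factorial:ℝ) by
      rw [show K+3 = (K+2)+1 by omega, fact_cast_succ]; push_cast; ring]
  have h2 : ((K+2).factorial:ℝ) ≠ 0 := by exact_mod_cast (K+2).factorial_pos.ne'
  have h3 : ((K:ℝ)+3) ≠ 0 := by positivity
  have h4 : ((K:ℝ)+4) ≠ 0 := by positivity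
  push_cast
  field_simp
  ring

lemma q_eq (K : ℕ) : q K = D 0 := by
  induction K with
  | zero =>
      unfold q
      have hr2 : r 2 = 3/4 := by
        have h := r_succ 1; rw [r_one] at h; norm_num at h; exact h
      rw [hr2]
      norm_num [Nat.factorial]
      ring
  | succ n ih => rw [q_succ n, ih]

lemma inv_W : Tendsto (fun m : ℕ => (2*(m:ℝ)+1) * (r m)^2 / ((m.factorial:ℝ))^2)
    atTop (𝓝 (2/π)) := by
  have h1 : ∀ m : ℕ, (2*(m:ℝ)+1) * (r m)^2 / ((m.factorial:ℝ))^2 = (Real.Wallis.W m)⁻¹ := by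
    intro m
    rw [Real.Wallis.W_eq_factorial_ratio, r_eq]
    have hf : ((m.factorial:ℝ)) ≠ 0 := by exact_mod_cast m.factorial_pos.ne'
    have hf2 : (((2*m).factorial:ℝ)) ≠ 0 := by exact_mod_cast (2*m).factorial_pos.ne'
    have h21 : (2*(m:ℝ)+1) ≠ 0 := by positivity
    have hpow : ((2:ℝ))^(4*m) = ((4:ℝ)^m)^2 := by
      rw [← pow_mul, show (4:ℝ) = 2^2 by norm_num, ← pow_mul]
      ring_nf
    rw [hpow]
    have h4 : ((4:ℝ))^m ≠ 0 := by positivity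
    push_cast
    field_simp
  have h2 : Tendsto (fun m : ℕ => (Real.Wallis.W m)⁻¹) atTop (𝓝 ((π/2)⁻¹)) := by
    exact (Real.Wallis.tendsto_W_nhds_pi_div_two).inv₀ (by positivity)
  have h3 : ((π/2):ℝ)⁻¹ = 2/π := by
    field_simp
  rw [← h3]
  exact h2.congr (fun m => (h1 m).symm)

noncomputable def h (K : ℕ) : ℝ := (2*(K:ℝ)+5) * (r (K+2))^2 / (((K+2).factorial:ℝ))^2

lemma h_lim : Tendsto h atTop (𝓝 (2/π)) := by
  have comp := inv_W.comp (tendsto_add_atTop_nat 2)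
  apply comp.congr
  intro K
  simp only [Function.comp, h]
  push_cast
  ring_nf

lemma rat_lim : Tendsto (fun K : ℕ => (32*(K:ℝ)^2+168*(K:ℝ)+217) / ((2*(K:ℝ)+5)*((K:ℝ)+3)))
    atTop (𝓝 16) := by
  have hz : Tendsto (fun K : ℕ => 1/((K:ℝ)+1)) atTop (𝓝 0) := by
    apply Tendsto.div_atTop tendsto_const_nhds
    exact tendsto_atTop_add_const_right _ _ tendsto_natCast_atTop_atTop
  have hnum := ((hz.const_mul (104:ℝ)).add ((hz.pow 2).const_mul (81:ℝ))).const_add (32:ℝ)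
  have hden := ((hz.const_mul (3:ℝ)).const_add (2:ℝ)).mul ((hz.const_mul (2:ℝ)).const_add (1:ℝ))
  have hne : ((2:ℝ)+3*0)*(1+2*0) ≠ 0 := by norm_num
  have hdiv := hnum.div hden hne
  have key : Tendsto (fun K : ℕ => (32*(K:ℝ)^2+168*(K:ℝ)+217) / ((2*(K:ℝ)+5)*((K:ℝ)+3)))
      atTop (𝓝 ((32 + (104*0+81*0^2)) / (((2:ℝ)+3*0)*(1+2*0)))) := by
    apply hdiv.congr
    intro K
    have hK : ((K:ℝ)+1) ≠ 0 := by positivity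
    have h25 : (2*(K:ℝ)+5) ≠ 0 := by positivity
    have h3 : ((K:ℝ)+3) ≠ 0 := by positivity
    simp only [Pi.div_apply]
    field_simp
    ring
  norm_num at key
  exact key

noncomputable def M : ℝ := ∑' n : ℕ, 1/((n:ℝ)+1)^2

noncomputable def Z (K : ℕ) : ℝ :=
  (64/3) * (r (K+2))^2 / (((K+2).factorial:ℝ) * ((K+3).factorial:ℝ))

lemma fact3_eq (K : ℕ) : ((K+3).factorial:ℝ) = ((K:ℝ)+3) * ((K+2).factorial:ℝ) := by
  rw [show K+3 = (K+2)+1 by omega, fact_cast_succ]; push_cast; ring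

lemma PsiZ_eq (K : ℕ) : Psi K * Z K =
    2048/(3*π) - (64/3) * ((32*(K:ℝ)^2+168*(K:ℝ)+217)/((2*(K:ℝ)+5)*((K:ℝ)+3))) * h K := by
  unfold Psi P Z h
  rw [fact3_eq]
  have hr : r (K+2) ≠ 0 := (r_pos _).ne'
  have hpi : (π:ℝ) ≠ 0 := Real.pi_ne_zero
  have hF2 : ((K+2).factorial:ℝ) ≠ 0 := by exact_mod_cast (K+2).factorial_pos.ne'
  have h3 : ((K:ℝ)+3) ≠ 0 := by positivity
  have h25 : (2*(K:ℝ)+5) ≠ 0 := by positivity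
  field_simp
  ring

lemma PsiZ_lim : Tendsto (fun K => Psi K * Z K) atTop (𝓝 0) := by
  have hmain := ((rat_lim.const_mul ((64:ℝ)/3)).mul h_lim).const_sub (2048/(3*π))
  have hval : 2048/(3*π) - (64/3)*16*(2/π) = 0 := by
    have hpi : (π:ℝ) ≠ 0 := Real.pi_ne_zero
    field_simp
    norm_num
  rw [hval] at hmain
  apply hmain.congr
  intro K
  rw [PsiZ_eq]

lemma M_nonneg : 0 ≤ M := tsum_nonneg (fun n => by positivity)

lemma S_nonneg (K : ℕ) : 0 ≤ S K := tsum_nonneg (u_nonneg K)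

lemma S_le (K : ℕ) : S K ≤ (6/((K+3).factorial:ℝ)) * M := by
  have hsb : Summable (fun n : ℕ => (6/((K+3).factorial:ℝ)) * (1/((n:ℝ)+1)^2)) :=
    summable_base.mul_left _
  have h1 : S K ≤ ∑' n : ℕ, (6/((K+3).factorial:ℝ)) * (1/((n:ℝ)+1)^2) := by
    apply Summable.tsum_le_tsum _ (summable_u K) hsb
    intro n
    calc u K n ≤ 6/(((K+3).factorial:ℝ)*((n:ℝ)+1)^2) := u_le K n
      _ = (6/((K+3).factorial:ℝ)) * (1/((n:ℝ)+1)^2) := by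
          rw [div_mul_eq_div_mul_one_div]
  rwa [tsum_mul_left] at h1

lemma PhiZ_nonneg (K : ℕ) : 0 ≤ Phi K * Z K := by
  apply mul_nonneg
  · unfold Phi
    have := S_nonneg K
    positivity
  · unfold Z
    have := (r_pos (K+2)).le
    positivity

lemma PhiZ_le (K : ℕ) : Phi K * Z K ≤ h K * (2304*M/((2*(K:ℝ)+5)*((K:ℝ)+3)^2)) := by
  have hF2 : (0:ℝ) < ((K+2).factorial:ℝ) := by exact_mod_cast (K+2).factorial_pos
  have hF3 : (0:ℝ) < ((K+3).factorial:ℝ) := by exact_mod_cast (K+3).factorial_pos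
  have hr2 : (0:ℝ) < (r (K+2))^2 := pow_pos (r_pos _) 2
  have h25 : (0:ℝ) < (2*(K:ℝ)+5) := by positivity
  have h3 : (0:ℝ) < ((K:ℝ)+3) := by positivity
  have e1 : Phi K * Z K = S K * (384 * (r (K+2))^2 / ((K+3).factorial:ℝ)) := by
    unfold Phi Z
    field_simp
    ring
  have e2 : h K * (2304*M/((2*(K:ℝ)+5)*((K:ℝ)+3)^2)) =
      ((6/((K+3).factorial:ℝ)) * M) * (384 * (r (K+2))^2 / ((K+3).factorial:ℝ)) := by
    unfold h
    rw [fact3_eq]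
    field_simp
    ring
  rw [e1, e2]
  apply mul_le_mul_of_nonneg_right (S_le K) (by positivity)

lemma PhiZ_lim : Tendsto (fun K => Phi K * Z K) atTop (𝓝 0) := by
  have hden : Tendsto (fun K : ℕ => (2*(K:ℝ)+5)*((K:ℝ)+3)^2) atTop atTop := by
    have ha : Tendsto (fun K : ℕ => 2*(K:ℝ)+5) atTop atTop :=
      tendsto_atTop_add_const_right _ 5 (tendsto_natCast_atTop_atTop.const_mul_atTop two_pos)
    have hb : Tendsto (fun K : ℕ => ((K:ℝ)+3)) atTop atTop :=
      tendsto_atTop_add_const_right _ 3 tendsto_natCast_atTop_atTop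
    have hsq : Tendsto (fun K : ℕ => ((K:ℝ)+3)^2) atTop atTop := by
      have := hb.atTop_mul_atTop₀ hb
      apply this.congr
      intro K; rw [sq]
    exact ha.atTop_mul_atTop₀ hsq
  have hzero : Tendsto (fun K : ℕ => 2304*M/((2*(K:ℝ)+5)*((K:ℝ)+3)^2)) atTop (𝓝 0) :=
    Tendsto.div_atTop tendsto_const_nhds hden
  have hbound := h_lim.mul hzero
  rw [mul_zero] at hbound
  exact tendsto_of_tendsto_of_tendsto_of_le_of_le tendsto_const_nhds hbound PhiZ_nonneg PhiZ_le

lemma q_lim : Tendsto q atTop (𝓝 0) := by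
  have := PsiZ_lim.sub PhiZ_lim
  rw [sub_zero] at this
  apply this.congr
  intro K
  unfold q D Z
  ring

lemma D_zero : D 0 = 0 := by
  have h1 : Tendsto q atTop (𝓝 (D 0)) :=
    tendsto_const_nhds.congr (fun K => (q_eq K).symm)
  exact (tendsto_nhds_unique h1 q_lim)


lemma D_all (K : ℕ) : D K = 0 := by
  induction K with
  | zero => exact D_zero
  | succ n ih =>
      have hrec := D_rec n
      rw [ih, mul_zero] at hrec
      have h52 : ((n:ℝ)+5/2)^2 ≠ 0 := by positivity
      exact (mul_eq_zero.mp hrec).resolve_left h52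

end Stmt8Aux

theorem stmt8 (k : ℕ) :
    32 * ((k + 2).factorial : ℝ) * ((k + 3).factorial : ℝ) / (π * (rising (1/2) (k + 2)) ^ 2) =
    32 * k ^ 2 + 168 * k + 217 + 18 * ((k + 2).factorial : ℝ) *
      ∑' n : ℕ, (rising (1/2) (n + 1)) ^ 2 /
        ((n + 3).factorial * (k + n + 3).factorial) := by
  have hD : Stmt8Aux.Psi k = Stmt8Aux.Phi k := by
    have h := Stmt8Aux.D_all k
    unfold Stmt8Aux.D at h
    linarith
  simp only [Stmt8Aux.Psi, Stmt8Aux.Phi, Stmt8Aux.P, Stmt8Aux.S, Stmt8Aux.u, Stmt8Aux.r] at hD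
  linarith [hD]
end

section
/- For every nonnegative integer k, k!(k+1)!/(2π (1/6)_{k+1}(5/6)_{k+1}) = 1 + (5/36)·k! · ∑_{n=0}^∞ (1/6)_n (5/6)_n/((n+1)!(n+k+1)!). -/
open Real Filter Topology

namespace Stmt15Aux

lemma rising_succ (x : ℝ) (n : ℕ) : rising x (n+1) = rising x n * (x + n) :=
  Finset.prod_range_succ _ _

lemma rising_pos {x : ℝ} (hx : 0 < x) (n : ℕ) : 0 < rising x n :=
  Finset.prod_pos fun i _ => by positivity

noncomputable def a (n : ℕ) : ℝ := rising (1/6) n * rising (5/6) n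

lemma a_pos (n : ℕ) : 0 < a n :=
  mul_pos (rising_pos (by norm_num) n) (rising_pos (by norm_num) n)

lemma a_zero : a 0 = 1 := by simp [a, rising]

lemma a_succ (n : ℕ) : a (n+1) = a n * ((1/6 + n) * (5/6 + n)) := by
  simp only [a, rising_succ]; ring

lemma rising_le_factorial {x : ℝ} (hx0 : 0 ≤ x) (hx : x ≤ 1) (n : ℕ) :
    rising x n ≤ n.factorial := by
  induction n with
  | zero => simp [rising]
  | succ n ih =>
    have h0 : (0:ℝ) ≤ rising x n := Finset.prod_nonneg fun i _ => by positivity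
    rw [rising_succ, Nat.factorial_succ]
    push_cast
    calc rising x n * (x + n) ≤ (n.factorial : ℝ) * (1 + n) := by
          apply mul_le_mul ih (by linarith) (by linarith) (by positivity)
      _ = (n + 1) * n.factorial := by ring

lemma a_le (n : ℕ) : a n ≤ (n.factorial : ℝ) ^ 2 := by
  have h1 := rising_le_factorial (x := 1/6) (by norm_num) (by norm_num) n
  have h2 := rising_le_factorial (x := 5/6) (by norm_num) (by norm_num) n
  have h0 : (0:ℝ) ≤ rising (1/6) n := (rising_pos (by norm_num) n).le
  have h5 : (0:ℝ) ≤ rising (5/6) n := (rising_pos (by norm_num) n).le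
  calc a n ≤ (n.factorial : ℝ) * n.factorial := mul_le_mul h1 h2 h5 (by positivity)
    _ = _ := by ring

lemma nat_bound (n k : ℕ) :
    (n+2) * ((k+1).factorial * n.factorial) ≤ 2 * (n+k+1).factorial := by
  have h := Nat.add_choose_mul_factorial_mul_factorial n (k+1)
  have hc : n + 1 ≤ (n + (k+1)).choose (k+1) := by
    rw [← Nat.choose_symm_add]
    calc n + 1 = (n+1).choose n := (Nat.choose_succ_self_right n).symm
      _ ≤ (n + (k+1)).choose n := Nat.choose_le_choose n (by omega)
  have : n + k + 1 = n + (k+1) := by omega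
  rw [this, ← h]
  calc (n+2) * ((k+1).factorial * n.factorial)
      ≤ (2 * (n+1)) * ((k+1).factorial * n.factorial) := by
        apply Nat.mul_le_mul_right; omega
    _ ≤ (2 * (n + (k+1)).choose (k+1)) * ((k+1).factorial * n.factorial) := by
        apply Nat.mul_le_mul_right; omega
    _ = 2 * ((n + (k+1)).choose (k+1) * n.factorial * (k+1).factorial) := by ring


noncomputable def t (k n : ℕ) : ℝ :=
  rising (1/6) n * rising (5/6) n / ((n + 1).factorial * (n + k + 1).factorial)

lemma t_eq (k n : ℕ) : t k n = a n / ((n + 1).factorial * (n + k + 1).factorial) := rfl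

lemma fact_pos (m : ℕ) : (0:ℝ) < m.factorial := by
  exact_mod_cast m.factorial_pos

lemma t_pos (k n : ℕ) : 0 < t k n := by
  rw [t_eq]
  exact div_pos (a_pos n) (mul_pos (fact_pos _) (fact_pos _))

lemma t_bound (k n : ℕ) :
    (k.factorial : ℝ) * t k n ≤ 2 / (((k:ℝ)+1) * ((n:ℝ)+1) * ((n:ℝ)+2)) := by
  rw [t_eq, ← mul_div_assoc, div_le_div_iff₀ (by positivity) (by positivity)]
  have hN : ((n+2) * ((k+1).factorial * n.factorial) : ℝ) ≤ 2 * (n+k+1).factorial := by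
    exact_mod_cast nat_bound n k
  have e1 : ((k+1).factorial : ℝ) = ((k:ℝ)+1) * k.factorial := by
    rw [Nat.factorial_succ]; push_cast; ring
  have e2 : ((n+1).factorial : ℝ) = ((n:ℝ)+1) * n.factorial := by
    rw [Nat.factorial_succ]; push_cast; ring
  calc (k.factorial : ℝ) * a n * (((k:ℝ)+1) * ((n:ℝ)+1) * ((n:ℝ)+2))
      ≤ (k.factorial : ℝ) * (n.factorial:ℝ)^2 * (((k:ℝ)+1) * ((n:ℝ)+1) * ((n:ℝ)+2)) := by
        apply mul_le_mul_of_nonneg_right (mul_le_mul_of_nonneg_left (a_le n) (by positivity))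
          (by positivity)
    _ = (((n:ℝ)+2) * ((k+1).factorial * n.factorial)) * ((n+1).factorial : ℝ) := by
        rw [e1, e2]; push_cast; ring
    _ ≤ (2 * ((n+k+1).factorial : ℝ)) * ((n+1).factorial : ℝ) := by
        apply mul_le_mul_of_nonneg_right _ (by positivity)
        exact_mod_cast hN
    _ = 2 * ((n+1).factorial * (n+k+1).factorial : ℝ) := by push_cast; ring

lemma hasSum_base : HasSum (fun n : ℕ => 1/(((n:ℝ)+1) * ((n:ℝ)+2))) 1 := by
  have hfun : (fun n : ℕ => 1/(((n:ℝ)+1) * ((n:ℝ)+2)))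
      = fun n : ℕ => 1/((n:ℝ)+1) - 1/((n:ℝ)+2) := by
    funext n
    rw [div_sub_div _ _ (by positivity) (by positivity)]
    norm_num
  rw [hfun]
  have hnn : ∀ n : ℕ, 0 ≤ 1/((n:ℝ)+1) - 1/((n:ℝ)+2) := by
    intro n
    have : 1/((n:ℝ)+2) ≤ 1/((n:ℝ)+1) := by
      apply one_div_le_one_div_of_le <;> [positivity; linarith]
    linarith
  rw [hasSum_iff_tendsto_nat_of_nonneg hnn]
  have hps : ∀ N : ℕ, ∑ n ∈ Finset.range N, (1/((n:ℝ)+1) - 1/((n:ℝ)+2))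
      = 1 - 1/((N:ℝ)+1) := by
    intro N
    have h := Finset.sum_range_sub' (fun n : ℕ => 1/((n:ℝ)+1)) N
    rw [show (fun n : ℕ => 1/((n:ℝ)+1) - 1/((n:ℝ)+2))
        = (fun n : ℕ => 1/((n:ℝ)+1) - 1/(((n+1:ℕ):ℝ)+1)) from by
      funext n; push_cast; ring]
    rw [h]
    norm_num
  simp only [hps]
  have : Tendsto (fun N : ℕ => 1 - 1/((N:ℝ)+1)) atTop (𝓝 (1 - 0)) :=
    tendsto_const_nhds.sub tendsto_one_div_add_atTop_nhds_zero_nat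
  simpa using this


lemma summable_t (k : ℕ) : Summable (t k) := by
  apply Summable.of_nonneg_of_le (f := fun n : ℕ => (2 / ((k.factorial : ℝ) * ((k:ℝ)+1))) * (1/(((n:ℝ)+1) * ((n:ℝ)+2))))
    (fun n => (t_pos k n).le)
  · intro n
    have hb := t_bound k n
    have hk : (0:ℝ) < k.factorial := fact_pos k
    rw [show (2 / ((k.factorial : ℝ) * ((k:ℝ)+1))) * (1/(((n:ℝ)+1) * ((n:ℝ)+2)))
        = (2 / (((k:ℝ)+1) * ((n:ℝ)+1) * ((n:ℝ)+2))) / (k.factorial : ℝ) from by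
      field_simp]
    rw [le_div_iff₀ hk, mul_comm]
    exact hb
  · exact hasSum_base.summable.mul_left _

lemma tsum_t_nonneg (k : ℕ) : 0 ≤ ∑' n, t k n :=
  tsum_nonneg fun n => (t_pos k n).le

lemma tsum_t_bound (k : ℕ) :
    (k.factorial : ℝ) * ∑' n, t k n ≤ 2 / ((k:ℝ)+1) := by
  rw [← tsum_mul_left]
  have h1 : Summable (fun n : ℕ => (k.factorial : ℝ) * t k n) := (summable_t k).mul_left _
  have h2 : Summable (fun n : ℕ => (2/((k:ℝ)+1)) * (1/(((n:ℝ)+1) * ((n:ℝ)+2)))) :=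
    hasSum_base.summable.mul_left _
  calc ∑' n, (k.factorial : ℝ) * t k n
      ≤ ∑' n : ℕ, (2/((k:ℝ)+1)) * (1/(((n:ℝ)+1) * ((n:ℝ)+2))) := by
        apply Summable.tsum_le_tsum _ h1 h2
        intro n
        have := t_bound k n
        rw [show (2/((k:ℝ)+1)) * (1/(((n:ℝ)+1) * ((n:ℝ)+2)))
            = 2 / (((k:ℝ)+1) * ((n:ℝ)+1) * ((n:ℝ)+2)) from by field_simp]
        exact this
    _ = (2/((k:ℝ)+1)) * 1 := by rw [tsum_mul_left, hasSum_base.tsum_eq]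
    _ = 2/((k:ℝ)+1) := mul_one _

noncomputable def u (k n : ℕ) : ℝ := (k+1).factorial * a n / (n.factorial * (n+k+1).factorial)

lemma u_eq (k n : ℕ) : u k n = ((k:ℝ)+1) * ((n:ℝ)+1) * ((k.factorial : ℝ) * t k n) := by
  rw [u, t_eq, Nat.factorial_succ]
  have e2 : ((n+1).factorial : ℝ) = ((n:ℝ)+1) * n.factorial := by
    rw [Nat.factorial_succ]; push_cast; ring
  rw [e2]
  push_cast
  have h1 : (n.factorial : ℝ) ≠ 0 := (fact_pos n).ne'
  have h2 : ((n+k+1).factorial : ℝ) ≠ 0 := (fact_pos _).ne'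
  field_simp

lemma u_zero (k : ℕ) : u k 0 = 1 := by
  rw [u, a_zero]
  simp only [Nat.zero_add, Nat.factorial_zero, Nat.cast_one, mul_one, one_mul]
  exact div_self (fact_pos (k+1)).ne'

lemma u_nonneg (k n : ℕ) : 0 ≤ u k n := by
  rw [u]
  have h1 := fact_pos (k+1)
  have h2 := fact_pos n
  have h3 := fact_pos (n+k+1)
  have h4 := a_pos n
  positivity

lemma u_le (k n : ℕ) : u k n ≤ 2 / ((n:ℝ)+2) := by
  rw [u_eq]
  have hb := t_bound k n
  have hkn : (0:ℝ) ≤ ((k:ℝ)+1) * ((n:ℝ)+1) := by positivity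
  calc ((k:ℝ)+1) * ((n:ℝ)+1) * ((k.factorial : ℝ) * t k n)
      ≤ ((k:ℝ)+1) * ((n:ℝ)+1) * (2 / (((k:ℝ)+1) * ((n:ℝ)+1) * ((n:ℝ)+2))) :=
        mul_le_mul_of_nonneg_left hb hkn
    _ = 2 / ((n:ℝ)+2) := by
        rw [eq_div_iff (by positivity : ((n:ℝ)+2) ≠ 0)]
        field_simp

lemma u_tendsto_zero (k : ℕ) : Tendsto (u k) atTop (𝓝 0) := by
  apply squeeze_zero (u_nonneg k) (u_le k)
  have h2 : Tendsto (fun n : ℕ => 1/((n:ℝ)+1)) atTop (𝓝 0) :=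
    tendsto_one_div_add_atTop_nhds_zero_nat
  have h3 : Tendsto (fun n : ℕ => 2/((n:ℝ)+2)) atTop (𝓝 0) := by
    have h4 := (h2.comp (tendsto_add_atTop_nat 1)).const_mul (2:ℝ)
    rw [mul_zero] at h4
    apply h4.congr
    intro n
    simp only [Function.comp]
    push_cast
    ring
  exact h3


lemma cert (k n : ℕ) :
    ((k:ℝ)+1)*((k:ℝ)+2)*(k.factorial:ℝ) * t k n
      - ((k:ℝ)+7/6)*((k:ℝ)+11/6)*((k+1).factorial:ℝ) * t (k+1) n
    = u k n - u k (n+1) := by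
  rw [t_eq, t_eq, u, u]
  rw [show n+(k+1)+1 = (n+k+1)+1 from by omega, show n+1+k+1 = (n+k+1)+1 from by omega]
  rw [a_succ]
  rw [Nat.factorial_succ (n+k+1), Nat.factorial_succ n, Nat.factorial_succ k]
  have h1 : (n.factorial : ℝ) ≠ 0 := (fact_pos n).ne'
  have h2 : ((n+k+1).factorial : ℝ) ≠ 0 := (fact_pos _).ne'
  have h3 : (k.factorial : ℝ) ≠ 0 := (fact_pos k).ne'
  push_cast
  field_simp
  ring

lemma key_tsum (k : ℕ) :
    ((k:ℝ)+1)*((k:ℝ)+2)*(k.factorial:ℝ) * (∑' n, t k n)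
      - ((k:ℝ)+7/6)*((k:ℝ)+11/6)*((k+1).factorial:ℝ) * (∑' n, t (k+1) n) = 1 := by
  have hs1 : Summable (fun n => ((k:ℝ)+1)*((k:ℝ)+2)*(k.factorial:ℝ) * t k n) :=
    (summable_t k).mul_left _
  have hs2 : Summable (fun n => ((k:ℝ)+7/6)*((k:ℝ)+11/6)*((k+1).factorial:ℝ) * t (k+1) n) :=
    (summable_t (k+1)).mul_left _
  have hsc : Summable (fun n => ((k:ℝ)+1)*((k:ℝ)+2)*(k.factorial:ℝ) * t k n
      - ((k:ℝ)+7/6)*((k:ℝ)+11/6)*((k+1).factorial:ℝ) * t (k+1) n) := hs1.sub hs2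
  have h1 : ∑' n, (((k:ℝ)+1)*((k:ℝ)+2)*(k.factorial:ℝ) * t k n
      - ((k:ℝ)+7/6)*((k:ℝ)+11/6)*((k+1).factorial:ℝ) * t (k+1) n)
      = ((k:ℝ)+1)*((k:ℝ)+2)*(k.factorial:ℝ) * (∑' n, t k n)
      - ((k:ℝ)+7/6)*((k:ℝ)+11/6)*((k+1).factorial:ℝ) * (∑' n, t (k+1) n) := by
    rw [Summable.tsum_sub hs1 hs2, tsum_mul_left, tsum_mul_left]
  rw [← h1]
  have h3 := hsc.hasSum.tendsto_sum_nat
  have hps : ∀ N : ℕ, ∑ i ∈ Finset.range N, (((k:ℝ)+1)*((k:ℝ)+2)*(k.factorial:ℝ) * t k i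
      - ((k:ℝ)+7/6)*((k:ℝ)+11/6)*((k+1).factorial:ℝ) * t (k+1) i) = u k 0 - u k N := by
    intro N
    rw [← Finset.sum_range_sub' (u k) N]
    exact Finset.sum_congr rfl fun i _ => cert k i
  have h4 : Tendsto (fun N : ℕ => u k 0 - u k N) atTop (𝓝 1) := by
    have h5 := (tendsto_const_nhds (x := u k 0) (f := (atTop : Filter ℕ))).sub (u_tendsto_zero k)
    simpa [u_zero] using h5
  exact tendsto_nhds_unique (h3.congr hps) h4


noncomputable def Fk (k : ℕ) : ℝ :=
  (k.factorial : ℝ) * ((k + 1).factorial : ℝ) /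
    (2 * π * rising (1/6) (k + 1) * rising (5/6) (k + 1))

noncomputable def Gk (k : ℕ) : ℝ := 1 + (5/36) * (k.factorial : ℝ) * ∑' n : ℕ, t k n

lemma rec_F (k : ℕ) :
    ((k:ℝ)+1)*((k:ℝ)+2) * Fk k = ((k:ℝ)+7/6)*((k:ℝ)+11/6) * Fk (k+1) := by
  have r1 := rising_pos (x := 1/6) (by norm_num) (k+1)
  have r2 := rising_pos (x := 5/6) (by norm_num) (k+1)
  have hπ := pi_ne_zero
  rw [Fk, Fk, rising_succ (1/6) (k+1), rising_succ (5/6) (k+1),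
    Nat.factorial_succ (k+1), Nat.factorial_succ k]
  push_cast
  have h1 : (1/6 + ((k:ℝ)+1)) ≠ 0 := by positivity
  have h2 : (5/6 + ((k:ℝ)+1)) ≠ 0 := by positivity
  field_simp
  ring

lemma rec_G (k : ℕ) :
    ((k:ℝ)+1)*((k:ℝ)+2) * Gk k = ((k:ℝ)+7/6)*((k:ℝ)+11/6) * Gk (k+1) := by
  have h := key_tsum k
  simp only [Gk]
  linear_combination (5/36 : ℝ) * h

lemma cross (k : ℕ) : ∀ m : ℕ, Fk (k+m) * Gk k = Fk k * Gk (k+m) := by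
  intro m
  induction m with
  | zero => rw [Nat.add_zero]
  | succ m ih =>
    have hF := rec_F (k+m)
    have hG := rec_G (k+m)
    have hq : ((k+m:ℕ):ℝ)+7/6 ≠ 0 := by positivity
    have hq2 : (((k+m:ℕ):ℝ)+7/6) * (((k+m:ℕ):ℝ)+11/6) ≠ 0 := by positivity
    apply mul_left_cancel₀ hq2
    rw [show k + (m+1) = (k+m)+1 from by omega]
    linear_combination (Gk k) * hF.symm + (Fk k) * hG
      + ((((k+m:ℕ)):ℝ)+1)*((((k+m:ℕ)):ℝ)+2) * ih


lemma Gk_le (K : ℕ) : Gk K ≤ 1 + (5/36) * (2/((K:ℝ)+1)) := by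
  have h := tsum_t_bound K
  rw [Gk, mul_assoc]
  nlinarith

lemma one_le_Gk (K : ℕ) : 1 ≤ Gk K := by
  have h1 := tsum_t_nonneg K
  have h2 := fact_pos K
  rw [Gk, mul_assoc]
  nlinarith

lemma Gk_tendsto : Tendsto Gk atTop (𝓝 1) := by
  have hup : Tendsto (fun K : ℕ => 1 + (5/36) * (2/((K:ℝ)+1))) atTop (𝓝 1) := by
    have h2 : Tendsto (fun n : ℕ => 1/((n:ℝ)+1)) atTop (𝓝 0) :=
      tendsto_one_div_add_atTop_nhds_zero_nat
    have h3 := (h2.const_mul (2:ℝ)).const_mul (5/36 : ℝ)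
    have h4 := (tendsto_const_nhds (x := (1:ℝ)) (f := (atTop : Filter ℕ))).add h3
    simp only [mul_zero, add_zero] at h4
    apply h4.congr
    intro n
    ring
  exact tendsto_of_tendsto_of_tendsto_of_le_of_le tendsto_const_nhds hup one_le_Gk Gk_le

lemma Fk_tendsto : Tendsto Fk atTop (𝓝 1) := by
  have hΓ : Gamma (1/6) * Gamma (5/6) = 2 * π := by
    have h := Real.Gamma_mul_Gamma_one_sub (1/6)
    rw [show (1:ℝ) - 1/6 = 5/6 by norm_num] at h
    rw [h, show π * (1/6) = π/6 by ring, Real.sin_pi_div_six]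
    field_simp
  have h1 : Tendsto (fun K : ℕ => Real.GammaSeq (1/6) K * Real.GammaSeq (5/6) K)
      atTop (𝓝 (2*π)) := by
    have h := (Real.GammaSeq_tendsto_Gamma (1/6)).mul (Real.GammaSeq_tendsto_Gamma (5/6))
    rwa [hΓ] at h
  have hinv : Tendsto (fun K : ℕ => ((K:ℝ))⁻¹) atTop (𝓝 0) :=
    tendsto_inv_atTop_zero.comp tendsto_natCast_atTop_atTop
  have h2 : Tendsto (fun K : ℕ =>
      (1 + ((K:ℝ))⁻¹) * (Real.GammaSeq (1/6) K * Real.GammaSeq (5/6) K) / (2*π))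
      atTop (𝓝 ((1 + 0) * (2*π) / (2*π))) :=
    ((tendsto_const_nhds.add hinv).mul h1).div_const _
  have hval : ((1:ℝ)+0) * (2*π)/(2*π) = 1 := by
    have := pi_ne_zero
    field_simp
    norm_num
  rw [hval] at h2
  apply Tendsto.congr' _ h2
  filter_upwards [eventually_ge_atTop 1] with K hK
  have hK0 : (0:ℝ) < (K:ℝ) := by exact_mod_cast Nat.lt_of_lt_of_le Nat.zero_lt_one hK
  have r1 := rising_pos (x := 1/6) (by norm_num) (K+1)
  have r2 := rising_pos (x := 5/6) (by norm_num) (K+1)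
  have e1 : Real.GammaSeq (1/6) K = (K:ℝ)^((1:ℝ)/6) * K.factorial / rising (1/6) (K+1) := rfl
  have e2 : Real.GammaSeq (5/6) K = (K:ℝ)^((5:ℝ)/6) * K.factorial / rising (5/6) (K+1) := rfl
  have hrp : (K:ℝ)^((1:ℝ)/6) * (K:ℝ)^((5:ℝ)/6) = (K:ℝ) := by
    rw [← Real.rpow_add hK0]
    norm_num
  rw [e1, e2, Fk, Nat.factorial_succ K]
  rw [show (K:ℝ)^((1:ℝ)/6) * K.factorial / rising (1/6) (K+1)
      * ((K:ℝ)^((5:ℝ)/6) * K.factorial / rising (5/6) (K+1))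
      = ((K:ℝ)^((1:ℝ)/6) * (K:ℝ)^((5:ℝ)/6)) * ((K.factorial : ℝ) * K.factorial)
        / (rising (1/6) (K+1) * rising (5/6) (K+1)) from by field_simp]
  rw [hrp]
  have hπ := pi_ne_zero
  push_cast
  field_simp

theorem Fk_eq_Gk (k : ℕ) : Fk k = Gk k := by
  have hcompF : Tendsto (fun m : ℕ => Fk (k+m)) atTop (𝓝 1) := by
    have h := Fk_tendsto.comp (tendsto_add_atTop_nat k)
    apply h.congr
    intro m
    simp only [Function.comp]
    rw [Nat.add_comm]
  have hcompG : Tendsto (fun m : ℕ => Gk (k+m)) atTop (𝓝 1) := by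
    have h := Gk_tendsto.comp (tendsto_add_atTop_nat k)
    apply h.congr
    intro m
    simp only [Function.comp]
    rw [Nat.add_comm]
  have h1 : Tendsto (fun m : ℕ => Fk (k+m) * Gk k) atTop (𝓝 (1 * Gk k)) :=
    hcompF.mul_const _
  have h2 : Tendsto (fun m : ℕ => Fk k * Gk (k+m)) atTop (𝓝 (Fk k * 1)) :=
    hcompG.const_mul _
  have h3 := tendsto_nhds_unique (h1.congr (fun m => cross k m)) h2
  rw [one_mul, mul_one] at h3
  exact h3.symm

end Stmt15Aux

theorem stmt15 (k : ℕ) :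
    (k.factorial : ℝ) * ((k + 1).factorial : ℝ) / (2 * π * rising (1/6) (k + 1) * rising (5/6) (k + 1)) =
    1 + (5/36) * (k.factorial : ℝ) *
      ∑' n : ℕ, rising (1/6) n * rising (5/6) n /
        ((n + 1).factorial * (n + k + 1).factorial) := by
  exact Stmt15Aux.Fk_eq_Gk k
end
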